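/- Let d ≥ 1 and let A, C ⊆ S^{d−1} ⊆ ℝ^d be closed sets with A = −A, C = −C, and A ∩ C = ∅. Then there exist K > 0 and δ ∈ (0,1) such that: (1) 0 ∉ C_δ − A_δ; (2) for all a ∈ A_δ and c ∈ C_δ, α_{a, c−a} ≥ K^{−1}; (3) for every k ∈ ℤ with k ∉ {0,1} and all a ∈ A_δ, c ∈ C_δ, |a + k(c−a)| ≥ K^{−1}|k| + 1; (4) for every integer k ≥ 1 and all a ∈ A_δ, c ∈ C_δ, |a + (k+1)(c−a)|² − |a + (1−k)(c−a)|² ≥ K^{−1} k. -/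

import Mathlib

open Finset

noncomputable section

/-- Euclidean dot product on `Fin d → ℝ`. -/
def euclDot {d : ℕ} (a b : Fin d → ℝ) : ℝ := ∑ i, a i * b i

/-- Euclidean norm on `Fin d → ℝ`. -/
def euclNorm {d : ℕ} (a : Fin d → ℝ) : ℝ := Real.sqrt (∑ i, (a i) ^ 2)

/-- The `δ`-thickening `R_δ = {r + v : r ∈ R, |v| ≤ δ}` of a set `R ⊆ ℝ^d`. -/
def thick {d : ℕ} (R : Set (Fin d → ℝ)) (δ : ℝ) : Set (Fin d → ℝ) :=
  {x | ∃ r ∈ R, euclNorm (x - r) ≤ δ}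

/-- `α_{a,b} = (1 − (a·b)²/(|a|²|b|²))^{1/2}`. -/
def alphaAngle {d : ℕ} (a b : Fin d → ℝ) : ℝ :=
  Real.sqrt (1 - (euclDot a b) ^ 2 / (euclNorm a ^ 2 * euclNorm b ^ 2))

/-!
By compactness the closed sets `A` and `C` of the sphere are at some positive distance `ε`, and
since `A = -A` every point of `C` is also `ε`-far from `-A`. For `δ` small against `ε`, points
`a ∈ A_δ`, `c ∈ C_δ` are then nearly unit vectors with `‖c - a‖` and `‖c + a‖` bounded below.
Two identities finish the proof. First,
`‖a + x (c - a)‖² = (1 - x) ‖a‖² + x ‖c‖² + x (x - 1) ‖c - a‖²`,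
whose last term dominates for integers `x ∉ {0, 1}`, giving (3) and (4). Second,
`4 (‖a‖² ‖c - a‖² - ⟪a, c - a⟫²) = (‖c - a‖² - (‖c‖ - ‖a‖)²) (‖c + a‖² - (‖c‖ - ‖a‖)²)`,
which keeps `a` and `c - a` uniformly away from parallel, giving (2).
-/

open scoped RealInnerProductSpace

theorem abs_sq_sub_one_le {t δ : ℝ} (h : |t - 1| ≤ δ) (hδ : δ ≤ 1) : |t ^ 2 - 1| ≤ 3 * δ := by
  have h2 : |t + 1| ≤ 3 := by
    calc |t + 1| = |(t - 1) + 2| := by ring_nf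
      _ ≤ |t - 1| + |2| := abs_add_le _ _
      _ ≤ 3 := by norm_num; linarith
  calc |t ^ 2 - 1| = |t - 1| * |t + 1| := by rw [← abs_mul]; ring_nf
    _ ≤ δ * 3 := mul_le_mul h h2 (abs_nonneg _) ((abs_nonneg _).trans h)
    _ = 3 * δ := mul_comm _ _

section

variable {E : Type*} [NormedAddCommGroup E]

structure NearUnitSeparated (δ η : ℝ) (a c : E) : Prop where
  abs_norm_left_sub_one_le : |‖a‖ - 1| ≤ δ
  abs_norm_right_sub_one_le : |‖c‖ - 1| ≤ δ
  le_norm_sub : η ≤ ‖c - a‖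
  le_norm_add : η ≤ ‖c + a‖

namespace NearUnitSeparated

variable {δ η : ℝ} {a c : E}

theorem of_norm_sub_le {a₀ c₀ : E} (ha₀ : ‖a₀‖ = 1) (hc₀ : ‖c₀‖ = 1)
    (hsub : η + 2 * δ ≤ ‖c₀ - a₀‖) (hadd : η + 2 * δ ≤ ‖c₀ + a₀‖)
    (ha : ‖a - a₀‖ ≤ δ) (hc : ‖c - c₀‖ ≤ δ) : NearUnitSeparated δ η a c where
  abs_norm_left_sub_one_le := ha₀ ▸ (abs_norm_sub_norm_le a a₀).trans ha
  abs_norm_right_sub_one_le := hc₀ ▸ (abs_norm_sub_norm_le c c₀).trans hc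
  le_norm_sub := by
    have := norm_add₃_le (a := c - a) (b := c₀ - c) (c := a - a₀)
    rw [norm_sub_rev c₀, show c - a + (c₀ - c) + (a - a₀) = c₀ - a₀ by abel] at this
    linarith
  le_norm_add := by
    have := norm_add₃_le (a := c + a) (b := c₀ - c) (c := a₀ - a)
    rw [norm_sub_rev c₀, norm_sub_rev a₀,
      show c + a + (c₀ - c) + (a₀ - a) = c₀ + a₀ by abel] at this
    linarith

theorem nonneg (h : NearUnitSeparated δ η a c) : 0 ≤ δ :=
  (abs_nonneg _).trans h.abs_norm_left_sub_one_le

theorem sub_ne_zero (h : NearUnitSeparated δ η a c) (hη : 0 < η) : c - a ≠ 0 :=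
  norm_pos_iff.mp (hη.trans_le h.le_norm_sub)

end NearUnitSeparated

variable [InnerProductSpace ℝ E]

theorem norm_add_smul_sub_sq (a c : E) (x : ℝ) :
    ‖a + x • (c - a)‖ ^ 2 = (1 - x) * ‖a‖ ^ 2 + x * ‖c‖ ^ 2 + x * (x - 1) * ‖c - a‖ ^ 2 := by
  have h := norm_sub_sq_real c a
  rw [norm_add_sq_real, inner_smul_right, inner_sub_right, real_inner_self_eq_norm_sq, norm_smul,
    mul_pow, Real.norm_eq_abs, sq_abs, real_inner_comm]
  linear_combination x * h

namespace NearUnitSeparated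

variable {δ η : ℝ} {a c : E}

theorem le_norm_sq_sub_norm_sq (h : NearUnitSeparated δ η a c) (hη : 0 < η) (hη1 : η ≤ 1)
    (hδ : δ ≤ η ^ 2 / 36) {x : ℝ} (hx : 0 ≤ x) :
    η ^ 2 * x ≤ ‖a + (x + 1) • (c - a)‖ ^ 2 - ‖a + (1 - x) • (c - a)‖ ^ 2 := by
  have hP := abs_le.mp (abs_sq_sub_one_le h.abs_norm_left_sub_one_le (by nlinarith))
  have hQ := abs_le.mp (abs_sq_sub_one_le h.abs_norm_right_sub_one_le (by nlinarith))
  have hR := pow_le_pow_left₀ hη.le h.le_norm_sub 2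
  have : 0 ≤ x * (2 * (‖c‖ ^ 2 - ‖a‖ ^ 2) + 2 * ‖c - a‖ ^ 2 - η ^ 2) :=
    mul_nonneg hx (by linarith)
  rw [norm_add_smul_sub_sq, norm_add_smul_sub_sq]
  linarith

theorem le_norm_add_smul_sub (h : NearUnitSeparated δ η a c) (hη : 0 < η) (hη1 : η ≤ 1)
    (hδ : δ ≤ η ^ 2 / 36) {x : ℝ} (hx : x ≤ -1 ∨ 2 ≤ x) :
    η ^ 2 / 8 * |x| + 1 ≤ ‖a + x • (c - a)‖ := by
  have hP := abs_sq_sub_one_le h.abs_norm_left_sub_one_le (by nlinarith)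
  have hQ := abs_sq_sub_one_le h.abs_norm_right_sub_one_le (by nlinarith)
  have hR := pow_le_pow_left₀ hη.le h.le_norm_sub 2
  have hx' : |1 - x| + |x| ≤ 3 * |x| ∧ |x| / 2 + x ^ 2 / 4 ≤ x * (x - 1) := by
    rcases hx with hx | hx
    · rw [abs_of_nonneg (by linarith : 0 ≤ 1 - x), abs_of_nonpos (by linarith : x ≤ 0)]
      constructor <;> nlinarith
    · rw [abs_of_nonpos (by linarith : 1 - x ≤ 0), abs_of_nonneg (by linarith : 0 ≤ x)]
      constructor <;> nlinarith
  have herr : -(3 * δ * (|1 - x| + |x|)) ≤ (1 - x) * (‖a‖ ^ 2 - 1) + x * (‖c‖ ^ 2 - 1) := by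
    refine neg_le_of_abs_le ((abs_add_le _ _).trans ?_)
    rw [abs_mul, abs_mul, mul_add, mul_comm (3 * δ), mul_comm (3 * δ)]
    gcongr
  have hsq : (η ^ 2 / 8 * |x| + 1) ^ 2 ≤ ‖a + x • (c - a)‖ ^ 2 := by
    have hxx : 0 ≤ x * (x - 1) := (by positivity : 0 ≤ |x| / 2 + x ^ 2 / 4).trans hx'.2
    have hη4 : η ^ 2 * η ^ 2 * x ^ 2 ≤ 1 * η ^ 2 * x ^ 2 := by gcongr; nlinarith
    rw [norm_add_smul_sub_sq]
    nlinarith [sq_abs x, mul_le_mul_of_nonneg_left hx'.1 h.nonneg,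
      mul_le_mul_of_nonneg_right hδ (abs_nonneg x), mul_le_mul_of_nonneg_left hR hxx,
      mul_le_mul_of_nonneg_right hx'.2 (sq_nonneg η)]
  exact (pow_le_pow_iff_left₀ (by positivity) (norm_nonneg _) two_ne_zero).mp hsq

theorem le_norm_sq_mul_norm_sq_sub_inner_sq (h : NearUnitSeparated δ η a c) (hη : 0 < η)
    (hη1 : η ≤ 1) (hδ : δ ≤ η ^ 2 / 36) :
    η ^ 4 / 16 ≤ ‖a‖ ^ 2 * ‖c - a‖ ^ 2 - ⟪a, c - a⟫ ^ 2 := by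
  have hgram : 4 * (‖a‖ ^ 2 * ‖c - a‖ ^ 2 - ⟪a, c - a⟫ ^ 2) =
      (‖c - a‖ ^ 2 - (‖c‖ - ‖a‖) ^ 2) * (‖c + a‖ ^ 2 - (‖c‖ - ‖a‖) ^ 2) := by
    rw [norm_sub_sq_real, norm_add_sq_real, inner_sub_right, real_inner_self_eq_norm_sq,
      real_inner_comm c a]
    ring
  have hdiff : (‖c‖ - ‖a‖) ^ 2 ≤ η ^ 2 / 4 := by
    have h2δ : |‖c‖ - ‖a‖| ≤ 2 * δ := by
      have := abs_sub_le ‖c‖ 1 ‖a‖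
      rw [abs_sub_comm 1] at this
      linarith [h.abs_norm_left_sub_one_le, h.abs_norm_right_sub_one_le]
    calc (‖c‖ - ‖a‖) ^ 2 = |‖c‖ - ‖a‖| ^ 2 := (sq_abs _).symm
      _ ≤ (η / 2) ^ 2 := pow_le_pow_left₀ (abs_nonneg _) (h2δ.trans (by nlinarith)) 2
      _ = η ^ 2 / 4 := by ring
  have hsub := pow_le_pow_left₀ hη.le h.le_norm_sub 2
  have hadd := pow_le_pow_left₀ hη.le h.le_norm_add 2
  have := mul_le_mul (by linarith : 3 * η ^ 2 / 4 ≤ ‖c - a‖ ^ 2 - (‖c‖ - ‖a‖) ^ 2)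
    (by linarith : 3 * η ^ 2 / 4 ≤ ‖c + a‖ ^ 2 - (‖c‖ - ‖a‖) ^ 2) (by positivity)
    (by linarith [sq_nonneg η])
  nlinarith

theorem le_sqrt_one_sub_inner_sq_div (h : NearUnitSeparated δ η a c) (hη : 0 < η)
    (hη1 : η ≤ 1) (hδ : δ ≤ η ^ 2 / 36) :
    η ^ 2 / 16 ≤ √(1 - ⟪a, c - a⟫ ^ 2 / (‖a‖ ^ 2 * ‖c - a‖ ^ 2)) := by
  have hgram := h.le_norm_sq_mul_norm_sq_sub_inner_sq hη hη1 hδ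
  have hP : ‖a‖ ≤ 1 + δ := by linarith [abs_le.mp h.abs_norm_left_sub_one_le]
  have hR : ‖c - a‖ ≤ 2 + 2 * δ := by
    linarith [norm_sub_le c a, abs_le.mp h.abs_norm_left_sub_one_le,
      abs_le.mp h.abs_norm_right_sub_one_le]
  have hPR : ‖a‖ ^ 2 * ‖c - a‖ ^ 2 ≤ 16 := by
    rw [← mul_pow]
    have hδ0 := h.nonneg
    have hδ1 : δ ≤ 1 / 36 := by nlinarith
    have : ‖a‖ * ‖c - a‖ ≤ 4 := calc
      _ ≤ (1 + δ) * (2 + 2 * δ) := mul_le_mul hP hR (norm_nonneg _) (by linarith)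
      _ ≤ 4 := by nlinarith
    nlinarith [mul_nonneg (norm_nonneg a) (norm_nonneg (c - a))]
  have hpos : 0 < ‖a‖ ^ 2 * ‖c - a‖ ^ 2 := by nlinarith [sq_nonneg ⟪a, c - a⟫, pow_pos hη 4]
  refine Real.le_sqrt_of_sq_le ?_
  rw [le_sub_comm, div_le_iff₀ hpos]
  nlinarith

end NearUnitSeparated

end

section Euclidean

variable {d : ℕ}

theorem euclNorm_eq_norm (x : Fin d → ℝ) : euclNorm x = ‖WithLp.toLp 2 x‖ := by
  simp [euclNorm, EuclideanSpace.norm_eq]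

theorem euclDot_eq_inner (x y : Fin d → ℝ) :
    euclDot x y = ⟪WithLp.toLp 2 x, WithLp.toLp 2 y⟫ := by
  simp [euclDot, PiLp.inner_apply, mul_comm]

theorem alphaAngle_eq (a b : Fin d → ℝ) :
    alphaAngle a b = √(1 - ⟪WithLp.toLp 2 a, WithLp.toLp 2 b⟫ ^ 2 /
      (‖WithLp.toLp 2 a‖ ^ 2 * ‖WithLp.toLp 2 b‖ ^ 2)) := by
  rw [alphaAngle, euclDot_eq_inner, euclNorm_eq_norm, euclNorm_eq_norm]

theorem exists_pos_forall_le_euclNorm_sub {A C : Set (Fin d → ℝ)} (hA : IsClosed A)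
    (hC : IsClosed C) (hAsub : A ⊆ {x | euclNorm x = 1}) (hAC : A ∩ C = ∅) :
    ∃ ε > 0, ∀ a ∈ A, ∀ c ∈ C, ε ≤ euclNorm (c - a) := by
  have hcont : Continuous (WithLp.ofLp : EuclideanSpace ℝ (Fin d) → Fin d → ℝ) :=
    PiLp.continuous_ofLp 2 _
  have hAc : IsCompact (WithLp.ofLp ⁻¹' A : Set (EuclideanSpace ℝ (Fin d))) :=
    (isCompact_sphere 0 1).of_isClosed_subset (hA.preimage hcont) fun x hx => by
      simpa [euclNorm_eq_norm] using hAsub hx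
  obtain ⟨r, hr, hsep⟩ := Metric.exists_pos_forall_lt_edist hAc (hC.preimage hcont)
    (Set.disjoint_iff_inter_eq_empty.mpr (by rw [← Set.preimage_inter, hAC, Set.preimage_empty]))
  refine ⟨r, hr, fun a ha c hc => ?_⟩
  have := hsep (WithLp.toLp 2 a) ha (WithLp.toLp 2 c) hc
  rw [euclNorm_eq_norm, WithLp.toLp_sub, ← dist_eq_norm, dist_comm]
  exact (by simpa [edist_dist] using this : (r : ℝ) < _).le

theorem nearUnitSeparated_of_mem_thick {A C : Set (Fin d → ℝ)}
    (hAsub : A ⊆ {x | euclNorm x = 1}) (hCsub : C ⊆ {x | euclNorm x = 1}) (hAneg : A = -A)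
    {δ η : ℝ} (hsep : ∀ a ∈ A, ∀ c ∈ C, η + 2 * δ ≤ euclNorm (c - a)) {a c : Fin d → ℝ}
    (ha : a ∈ thick A δ) (hc : c ∈ thick C δ) :
    NearUnitSeparated δ η (WithLp.toLp 2 a) (WithLp.toLp 2 c) := by
  obtain ⟨a₀, ha₀, haa₀⟩ := ha
  obtain ⟨c₀, hc₀, hcc₀⟩ := hc
  have hneg : -a₀ ∈ A := by
    rw [hAneg, Set.neg_mem_neg]
    exact ha₀
  refine .of_norm_sub_le (a₀ := WithLp.toLp 2 a₀) (c₀ := WithLp.toLp 2 c₀) ?_ ?_ ?_ ?_ ?_ ?_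
  · simpa [euclNorm_eq_norm] using hAsub ha₀
  · simpa [euclNorm_eq_norm] using hCsub hc₀
  · simpa [euclNorm_eq_norm] using hsep a₀ ha₀ c₀ hc₀
  · simpa [euclNorm_eq_norm] using hsep (-a₀) hneg c₀ hc₀
  · simpa [euclNorm_eq_norm] using haa₀
  · simpa [euclNorm_eq_norm] using hcc₀

end Euclidean

theorem sphere_geometry_general {d : ℕ} (A C : Set (Fin d → ℝ))
    (hAcl : IsClosed A) (hCcl : IsClosed C)
    (hAsub : A ⊆ {x | euclNorm x = 1}) (hCsub : C ⊆ {x | euclNorm x = 1})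
    (hAneg : A = -A) (hdisj : A ∩ C = ∅) :
    ∃ K δ : ℝ, 0 < K ∧ 0 < δ ∧ δ < 1 ∧
      (∀ a ∈ thick A δ, ∀ c ∈ thick C δ, c - a ≠ 0) ∧
      (∀ a ∈ thick A δ, ∀ c ∈ thick C δ, K⁻¹ ≤ alphaAngle a (c - a)) ∧
      (∀ k : ℤ, k ≠ 0 → k ≠ 1 → ∀ a ∈ thick A δ, ∀ c ∈ thick C δ,
        K⁻¹ * |(k : ℝ)| + 1 ≤ euclNorm (a + (k : ℝ) • (c - a))) ∧
      (∀ k : ℤ, 1 ≤ k → ∀ a ∈ thick A δ, ∀ c ∈ thick C δ,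
        K⁻¹ * (k : ℝ) ≤ euclNorm (a + ((k : ℝ) + 1) • (c - a)) ^ 2 -
          euclNorm (a + (1 - (k : ℝ)) • (c - a)) ^ 2) := by
  obtain ⟨ε, hε, hsep⟩ := exists_pos_forall_le_euclNorm_sub hAcl hCcl hAsub hdisj
  obtain ⟨η, hη, hη1, hηε⟩ : ∃ η, 0 < η ∧ η ≤ 1 ∧ 2 * η ≤ ε :=
    ⟨min ε 1 / 2, by positivity, by linarith [min_le_right ε 1], by linarith [min_le_left ε 1]⟩
  have key : ∀ a ∈ thick A (η ^ 2 / 36), ∀ c ∈ thick C (η ^ 2 / 36),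
      NearUnitSeparated (η ^ 2 / 36) η (WithLp.toLp 2 a) (WithLp.toLp 2 c) :=
    fun a ha c hc => nearUnitSeparated_of_mem_thick hAsub hCsub hAneg
      (fun a₀ ha₀ c₀ hc₀ => le_trans (by nlinarith) (hsep a₀ ha₀ c₀ hc₀)) ha hc
  refine ⟨16 / η ^ 2, η ^ 2 / 36, by positivity, by positivity, by nlinarith, ?_, ?_, ?_, ?_⟩
  · intro a ha c hc hca
    exact (key a ha c hc).sub_ne_zero hη (by rw [← WithLp.toLp_sub, hca, WithLp.toLp_zero])
  · intro a ha c hc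
    rw [inv_div, alphaAngle_eq]
    exact (key a ha c hc).le_sqrt_one_sub_inner_sq_div hη hη1 le_rfl
  · intro k hk0 hk1 a ha c hc
    have hk : (k : ℝ) ≤ -1 ∨ 2 ≤ (k : ℝ) := by
      rcases (by omega : k ≤ -1 ∨ 2 ≤ k) with h | h
      exacts [.inl (by exact_mod_cast h), .inr (by exact_mod_cast h)]
    rw [inv_div, euclNorm_eq_norm]
    calc η ^ 2 / 16 * |(k : ℝ)| + 1 ≤ η ^ 2 / 8 * |(k : ℝ)| + 1 := by gcongr; norm_num
      _ ≤ _ := (key a ha c hc).le_norm_add_smul_sub hη hη1 le_rfl hk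
  · intro k hk a ha c hc
    have hk : (0 : ℝ) ≤ k := by exact_mod_cast (by omega : 0 ≤ k)
    rw [inv_div, euclNorm_eq_norm, euclNorm_eq_norm]
    calc η ^ 2 / 16 * (k : ℝ) ≤ η ^ 2 * k :=
        mul_le_mul_of_nonneg_right (div_le_self (sq_nonneg η) (by norm_num)) hk
      _ ≤ _ := (key a ha c hc).le_norm_sq_sub_norm_sq hη hη1 le_rfl hk

/-- sphere geometry lemma: for closed, symmetric, disjoint subsets `A, C`
of the unit sphere `S^{d−1}`, there exist `K > 0` and `δ ∈ (0,1)` with the four stated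
uniform geometric properties of the thickenings `A_δ`, `C_δ`. -/
theorem sphere_geometry {d : ℕ} (hd : 1 ≤ d) (A C : Set (Fin d → ℝ))
    (hAcl : IsClosed A) (hCcl : IsClosed C)
    (hAsub : A ⊆ {x | euclNorm x = 1}) (hCsub : C ⊆ {x | euclNorm x = 1})
    (hAneg : A = -A) (hCneg : C = -C) (hdisj : A ∩ C = ∅) :
    ∃ K δ : ℝ, 0 < K ∧ 0 < δ ∧ δ < 1 ∧
      (∀ a ∈ thick A δ, ∀ c ∈ thick C δ, c - a ≠ 0) ∧
      (∀ a ∈ thick A δ, ∀ c ∈ thick C δ, K⁻¹ ≤ alphaAngle a (c - a)) ∧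
      (∀ k : ℤ, k ≠ 0 → k ≠ 1 → ∀ a ∈ thick A δ, ∀ c ∈ thick C δ,
        K⁻¹ * |(k : ℝ)| + 1 ≤ euclNorm (a + (k : ℝ) • (c - a))) ∧
      (∀ k : ℤ, 1 ≤ k → ∀ a ∈ thick A δ, ∀ c ∈ thick C δ,
        K⁻¹ * (k : ℝ) ≤ euclNorm (a + ((k : ℝ) + 1) • (c - a)) ^ 2 -
          euclNorm (a + (1 - (k : ℝ)) • (c - a)) ^ 2) :=
  sphere_geometry_general A C hAcl hCcl hAsub hCsub hAneg hdisj

end
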